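/- arXiv:1407.0367 — 2 statements merged into one kernel-verified Lean document; each statement's English description precedes it below -/
import Mathlib

section
/- Let G be a connected graph on at least 2 vertices. If b_R(G) > Δ(G), then G is Roman domination vertex critical, i.e., γ_R(G − v) < γ_R(G) for every vertex v of G. -/
/-- A Roman dominating function on `G`: labels in `{0,1,2}` and every vertex
labeled `0` has a neighbor labeled `2`. -/
def IsRDF {V : Type*} (G : SimpleGraph V) (f : V → ℕ) : Prop :=
  (∀ v, f v ≤ 2) ∧ ∀ v, f v = 0 → ∃ u, G.Adj v u ∧ f u = 2

/-- The Roman domination number of `G`. -/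
noncomputable def romanDom {V : Type*} [Fintype V] (G : SimpleGraph V) : ℕ :=
  sInf {w | ∃ f, IsRDF G f ∧ ∑ v, f v = w}

/-- The Roman domination number of the vertex-deleted graph `G - v`. -/
noncomputable def romanDomDel {V : Type*} [Fintype V] [DecidableEq V]
    (G : SimpleGraph V) (v : V) : ℕ :=
  romanDom (G.induce {w | w ≠ v})

/-- The Roman bondage number of `G`. -/
noncomputable def romanBondage {V : Type*} [Fintype V] [DecidableEq V]
    (G : SimpleGraph V) : ℕ :=
  sInf {k | ∃ B : Finset (Sym2 V), ↑B ⊆ G.edgeSet ∧ B.card = k ∧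
    romanDom (G.deleteEdges ↑B) ≠ romanDom G}

lemma romanDom_set_nonempty {V : Type*} [Fintype V] (G : SimpleGraph V) :
    {w | ∃ f, IsRDF G f ∧ ∑ v, f v = w}.Nonempty := by
  exact ⟨_, fun _ => 1, ⟨fun _ => one_le_two, fun v h => by simp at h⟩, rfl⟩

/-- If `G` is connected of order at least `2` and
`b_R(G) > Δ(G)`, then `G` is Roman domination vertex critical. -/
theorem stmt11 {V : Type*} [Fintype V] [DecidableEq V] (G : SimpleGraph V)
    [DecidableRel G.Adj] (hc : G.Connected) (hn : 2 ≤ Fintype.card V)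
    (hb : G.maxDegree < romanBondage G) :
    ∀ v : V, romanDomDel G v < romanDom G := by
  intro v
  set B : Finset (Sym2 V) := G.incidenceFinset v with hB
  have hBsub : ↑B ⊆ G.edgeSet := by
    intro e he
    simp only [hB, Finset.mem_coe, SimpleGraph.mem_incidenceFinset] at he
    exact he.1
  have hBcard : B.card = G.degree v := G.card_incidenceFinset_eq_degree v
  set H : SimpleGraph V := G.deleteEdges ↑B with hH
  -- Step A: romanDom H = romanDom G
  have hA : romanDom H = romanDom G := by
    by_contra hne
    have : romanBondage G ≤ B.card := Nat.sInf_le ⟨B, hBsub, rfl, hne⟩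
    have := hBcard ▸ this
    have hd := G.degree_le_maxDegree v
    omega
  -- Step B: an optimal RDF on H
  obtain ⟨f, hf, hsum⟩ : ∃ f, IsRDF H f ∧ ∑ u, f u = romanDom H :=
    Nat.sInf_mem (romanDom_set_nonempty H)
  -- v is isolated in H
  have hiso : ∀ u, ¬ H.Adj v u := by
    intro u hadj
    rw [hH, SimpleGraph.deleteEdges_adj] at hadj
    exact hadj.2 (by
      simp only [hB, Finset.mem_coe, SimpleGraph.mem_incidenceFinset,
        SimpleGraph.mk'_mem_incidenceSet_left_iff]
      exact hadj.1)
  have hfv : 1 ≤ f v := by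
    rcases Nat.eq_zero_or_pos (f v) with h0 | h1
    · obtain ⟨u, hu, -⟩ := hf.2 v h0
      exact absurd hu (hiso u)
    · exact h1
  -- Step D: restriction is an RDF on G - v
  set g : {w // w ∈ {w | w ≠ v}} → ℕ := fun u => f u.1 with hg
  have hgRDF : IsRDF (G.induce {w | w ≠ v}) g := by
    constructor
    · exact fun u => hf.1 u.1
    · rintro ⟨u, hu⟩ h0
      obtain ⟨w, hw, hw2⟩ := hf.2 u h0
      have hwG : G.Adj u w := by
        rw [hH, SimpleGraph.deleteEdges_adj] at hw
        exact hw.1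
      have hwv : w ≠ v := by
        rintro rfl
        exact hiso u hw.symm
      exact ⟨⟨w, hwv⟩, hwG, hw2⟩
  -- sum of g
  have hgsum : ∑ u, g u = (∑ u, f u) - f v := by
    have h1 : ∑ u, g u = ∑ u ∈ Finset.univ.erase v, f u := by
      rw [Finset.sum_subtype (p := fun w => w ∈ {x | x ≠ v}) (Finset.univ.erase v)
        (fun x => by simp [Finset.mem_erase]) f]
    have h2 : ∑ u, f u = f v + ∑ u ∈ Finset.univ.erase v, f u :=
      (Finset.add_sum_erase _ f (Finset.mem_univ v)).symm
    omega
  have hle : romanDomDel G v ≤ (∑ u, f u) - f v := by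
    rw [romanDomDel]
    exact hgsum ▸ Nat.sInf_le ⟨g, hgRDF, rfl⟩
  have h3 : (∑ u, f u) = romanDom G := hsum.trans hA
  have h4 : f v ≤ ∑ u, f u :=
    Finset.single_le_sum (fun _ _ => Nat.zero_le _) (Finset.mem_univ v)
  omega
end

section
/- Let G be a connected graph with maximum degree Δ(G) ≥ 2. Then b_R(G) ≤ 2·ad(G) + Δ(G) − 3, where ad(G) = 2|E(G)|/|V(G)| is the average degree. -/
/-!
Call `x ≠ y` *close* if they are adjacent or have a common neighbour. With `φ = deg - ad(G)`
we have `∑ φ = 0`, so some close pair has `φ x + φ y ≤ 0`, i.e. `deg x + deg y ≤ 2·ad(G)`: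
otherwise the vertices with `φ ≤ 0` have pairwise disjoint closed neighbourhoods, each of positive
`φ`-mass, every other vertex has `φ > 0`, and `∑ φ > 0`.

A close pair lies on a path `u v w` whose third vertex has degree at most `Δ(G)`. Deleting every
edge at `u`, `v` or `w` except `vw`, at most `deg u + deg v + deg w - 3` edges, isolates `u` and
makes `vw` a component. This raises `γ_R`: a Roman dominating function of the new graph spends at
least `3` on `u, v, w`, whereas in `G` the label `2` on `v` alone dominates all three.
-/

open Finset SimpleGraph

section

variable {V : Type*} [Fintype V]

lemma exists_isRDF_sum_eq_romanDom (G : SimpleGraph V) :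
    ∃ f, IsRDF G f ∧ ∑ v, f v = romanDom G :=
  Nat.sInf_mem (s := {w | ∃ f, IsRDF G f ∧ ∑ v, f v = w})
    ⟨_, fun _ => 1, ⟨fun _ => one_le_two, fun _ h => absurd h one_ne_zero⟩, rfl⟩

lemma IsRDF.romanDom_le {G : SimpleGraph V} {f : V → ℕ} (hf : IsRDF G f) :
    romanDom G ≤ ∑ v, f v :=
  Nat.sInf_le ⟨f, hf, rfl⟩

lemma romanBondage_le_card [DecidableEq V] {G : SimpleGraph V} {B : Finset (Sym2 V)}
    (hB : ↑B ⊆ G.edgeSet) (hne : romanDom (G.deleteEdges ↑B) ≠ romanDom G) :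
    romanBondage G ≤ #B :=
  Nat.sInf_le ⟨B, hB, rfl, hne⟩

lemma romanDom_lt_of_le_isolating_path {G H : SimpleGraph V} (hle : H ≤ G) {u v w : V}
    (huv : G.Adj u v) (hvw : G.Adj v w) (huw : u ≠ w) (hu : ∀ y, ¬H.Adj u y)
    (hv : ∀ y, H.Adj v y → y = w) (hw : ∀ y, H.Adj w y → y = v) :
    romanDom G < romanDom H := by
  classical
  obtain ⟨f, hf, hfsum⟩ := exists_isRDF_sum_eq_romanDom H
  have hfu : f u ≠ 0 := fun h => (hf.2 u h).elim fun y hy => hu y hy.1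
  have hfvw : 2 ≤ f v + f w := by
    by_contra! h
    rcases (show f v = 0 ∨ f w = 0 by omega) with h0 | h0
    · obtain ⟨y, hy, hy2⟩ := hf.2 v h0
      rw [hv y hy] at hy2
      omega
    · obtain ⟨y, hy, hy2⟩ := hf.2 w h0
      rw [hw y hy] at hy2
      omega
  set g : V → ℕ := fun x => if x = v then 2 else if x = u ∨ x = w then 0 else f x with hg
  have hgRDF : IsRDF G g := by
    refine ⟨fun x => ?_, fun x hx => ?_⟩
    · simp only [hg]
      split_ifs <;> grind [IsRDF]
    · simp only [hg] at hx
      split_ifs at hx with hxv hxuw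
      · exact ⟨v, by rcases hxuw with rfl | rfl <;> simp [huv, hvw.symm, hg]⟩
      · obtain ⟨y, hy, hfy⟩ := hf.2 x hx
        refine ⟨y, hle hy, ?_⟩
        have hyv : y ≠ v := fun h => hxuw (Or.inr (hv x (h ▸ hy.symm)))
        have hyu : y ≠ u := fun h => hu x (h ▸ hy.symm)
        have hyw : y ≠ w := fun h => hxv (hw x (h ▸ hy.symm))
        simp [hg, hyv, hyu, hyw, hfy]
  have hsplit : ∀ h : V → ℕ, ∑ x, h x = h u + h v + h w + ∑ x ∈ {u, v, w}ᶜ, h x := by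
    intro h
    rw [← sum_add_sum_compl {u, v, w}, sum_insert (by simp [huv.ne, huw]),
      sum_insert (by simp [hvw.ne]), sum_singleton]
    ring
  have hrest : ∑ x ∈ {u, v, w}ᶜ, g x = ∑ x ∈ {u, v, w}ᶜ, f x :=
    sum_congr rfl fun x hx => by simp_all
  have hguvw : g u + g v + g w = 2 := by simp [hg, huv.ne, huw, hvw.ne']
  have := hgRDF.romanDom_le
  have := hsplit f
  have := hsplit g
  omega

lemma card_union_add_one_le_of_mem_inter {α : Type*} [DecidableEq α] {s t : Finset α} {a : α}
    (ha : a ∈ s ∩ t) : #(s ∪ t) + 1 ≤ #s + #t := by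
  have := card_pos.2 ⟨a, ha⟩
  have := card_union_add_card_inter s t
  omega

lemma romanBondage_add_three_le [DecidableEq V] (G : SimpleGraph V) [DecidableRel G.Adj]
    {u v w : V} (huv : G.Adj u v) (hvw : G.Adj v w) (huw : u ≠ w) :
    romanBondage G + 3 ≤ G.degree u + G.degree v + G.degree w := by
  set B := (G.incidenceFinset u ∪ G.incidenceFinset v ∪ G.incidenceFinset w).erase s(v, w)
  have hBG : ↑B ⊆ G.edgeSet := fun e he => by
    simp only [B, coe_erase, coe_union, coe_incidenceFinset, Set.mem_sdiff, Set.mem_union] at he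
    rcases he.1 with (he | he) | he <;> exact G.incidenceSet_subset _ he
  have hcard : #B + 3 ≤ G.degree u + G.degree v + G.degree w := by
    have huv' := card_union_add_one_le_of_mem_inter (s := G.incidenceFinset u) (t := G.incidenceFinset v)
      (a := s(u, v)) (by simp [huv, mk'_mem_incidenceSet_right_iff])
    have hvw' := card_union_add_one_le_of_mem_inter (s := G.incidenceFinset u ∪ G.incidenceFinset v)
      (t := G.incidenceFinset w) (a := s(v, w)) (by simp [hvw, mk'_mem_incidenceSet_right_iff])
    have hB : #B + 1 = _ := card_erase_add_one (s := G.incidenceFinset u ∪ G.incidenceFinset v ∪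
      G.incidenceFinset w) (a := s(v, w)) (by simp [hvw])
    simp only [card_incidenceFinset_eq_degree] at huv' hvw'
    omega
  have hmemB : ∀ x y, G.Adj x y → (x = u ∨ x = v ∨ x = w) → s(x, y) ≠ s(v, w) → s(x, y) ∈ B := by
    intro x y hxy hx hne
    simp only [B, mem_erase, mem_union, mem_incidenceFinset]
    rcases hx with rfl | rfl | rfl <;> simp [hne, hxy]
  have hlt : romanDom G < romanDom (G.deleteEdges ↑B) := by
    refine romanDom_lt_of_le_isolating_path (G.deleteEdges_le _) huv hvw huw ?_ ?_ ?_ <;>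
      intro y hy <;> rw [deleteEdges_adj] at hy
    · exact hy.2 (hmemB u y hy.1 (Or.inl rfl) (by grind [Sym2.eq_iff, huv.ne]))
    · by_contra hyw
      exact hy.2 (hmemB v y hy.1 (Or.inr (Or.inl rfl)) (by grind [Sym2.eq_iff]))
    · by_contra hyv
      exact hy.2 (hmemB w y hy.1 (Or.inr (Or.inr rfl)) (by grind [Sym2.eq_iff]))
  have := romanBondage_le_card hBG hlt.ne'
  omega

lemma sum_pos_of_add_pos_of_close [Nonempty V] (G : SimpleGraph V) [DecidableRel G.Adj]
    (hdeg : ∀ x, 0 < G.degree x) {φ : V → ℝ}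
    (hφ : ∀ x y, x ≠ y → (G.Adj x y ∨ ∃ m, G.Adj x m ∧ G.Adj m y) → 0 < φ x + φ y) :
    0 < ∑ x, φ x := by
  classical
  set S := univ.filter (φ · ≤ 0)
  set N : V → Finset V := fun s => insert s (G.neighborFinset s)
  have hN : ∀ s ∈ S, 0 < ∑ x ∈ N s, φ x := by
    intro s hs
    have hφs : φ s ≤ 0 := (mem_filter.1 hs).2
    have hnbr : ∀ x ∈ G.neighborFinset s, -φ s < φ x := fun x hx => by
      have := hφ s x (G.ne_of_adj ((mem_neighborFinset _ _ _).1 hx))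
        (Or.inl ((mem_neighborFinset _ _ _).1 hx))
      linarith
    have hlt := sum_lt_sum_of_nonempty
      (card_pos.1 ((G.card_neighborFinset_eq_degree s).symm ▸ hdeg s)) hnbr
    have hdeg1 : (1 : ℝ) ≤ #(G.neighborFinset s) := by
      exact_mod_cast (G.card_neighborFinset_eq_degree s).symm ▸ hdeg s
    rw [sum_const, nsmul_eq_mul] at hlt
    rw [sum_insert (notMem_neighborFinset_self _ _)]
    nlinarith
  -- Two vertices of `S` are never close, as `φ s + φ t ≤ 0`.
  have hdisj : (S : Set V).PairwiseDisjoint N := by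
    intro s hs t ht hst
    refine disjoint_left.2 fun x hxs hxt => ?_
    have hclose : G.Adj s t ∨ ∃ m, G.Adj s m ∧ G.Adj m t := by
      simp only [N, mem_insert, mem_neighborFinset] at hxs hxt
      rcases hxs with rfl | hxs <;> rcases hxt with rfl | hxt
      · exact absurd rfl hst
      · exact Or.inl hxt.symm
      · exact Or.inl hxs
      · exact Or.inr ⟨x, hxs, hxt.symm⟩
    have := hφ s t hst hclose
    linarith [(mem_filter.1 hs).2, (mem_filter.1 ht).2]
  have hout : ∀ x ∉ S, 0 < φ x := fun x hx => by simpa [S] using hx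
  rcases S.eq_empty_or_nonempty with hS | hS
  · exact sum_pos (fun x _ => hout x (hS ▸ notMem_empty x)) univ_nonempty
  · set U := S.biUnion N
    have hU : 0 < ∑ x ∈ U, φ x := by
      rw [sum_biUnion hdisj]
      exact sum_pos hN hS
    have hUc : 0 ≤ ∑ x ∈ Uᶜ, φ x := sum_nonneg fun x hx =>
      (hout x fun hxS => mem_compl.1 hx (mem_biUnion.2 ⟨x, hxS, mem_insert_self _ _⟩)).le
    rw [← sum_add_sum_compl U]
    linarith

lemma exists_close_pair_degree_add_le [Nonempty V] (G : SimpleGraph V) [DecidableRel G.Adj]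
    (hdeg : ∀ x, 0 < G.degree x) :
    ∃ x y, x ≠ y ∧ (G.Adj x y ∨ ∃ m, G.Adj x m ∧ G.Adj m y) ∧
      (G.degree x + G.degree y : ℝ) ≤ 2 * (2 * #G.edgeFinset / Fintype.card V) := by
  by_contra! h
  set ad : ℝ := 2 * #G.edgeFinset / Fintype.card V
  have hsum : ∑ x, (G.degree x - ad) = 0 := by
    have hn : (Fintype.card V : ℝ) ≠ 0 := Nat.cast_ne_zero.2 Fintype.card_ne_zero
    rw [sum_sub_distrib, sum_const, card_univ, nsmul_eq_mul, ← Nat.cast_sum,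
      sum_degrees_eq_twice_card_edges]
    simp only [ad]
    field_simp
    push_cast
    ring
  have := sum_pos_of_add_pos_of_close G hdeg (φ := fun x => G.degree x - ad)
    fun x y hxy hclose => by linarith [h x y hxy hclose]
  linarith

lemma SimpleGraph.Connected.exists_adj_ne_ne [DecidableEq V] {G : SimpleGraph V}
    (hc : G.Connected) (h3 : 3 ≤ Fintype.card V) (x y : V) :
    ∃ z, z ≠ x ∧ z ≠ y ∧ (G.Adj x z ∨ G.Adj y z) := by
  obtain ⟨z, -, hz⟩ := exists_mem_notMem_of_card_lt_card (s := {x, y}) (t := univ)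
    (by rw [card_univ]; exact (card_le_two).trans_lt (by omega))
  obtain ⟨p⟩ := hc.preconnected x z
  obtain ⟨d, -, hd, hdz⟩ := p.exists_boundary_dart {x, y} (by simp) (by simpa using hz)
  refine ⟨d.snd, ?_, ?_, ?_⟩ <;> simp only [Set.mem_insert_iff, Set.mem_singleton_iff] at hd hdz
  · exact fun h => hdz (Or.inl h)
  · exact fun h => hdz (Or.inr h)
  · rcases hd with h | h <;> [left; right] <;> exact h ▸ d.adj

lemma romanBondage_add_three_le_of_close [DecidableEq V] (G : SimpleGraph V)
    [DecidableRel G.Adj] (hc : G.Connected) (h3 : 3 ≤ Fintype.card V) {x y : V} (hxy : x ≠ y)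
    (hclose : G.Adj x y ∨ ∃ m, G.Adj x m ∧ G.Adj m y) :
    romanBondage G + 3 ≤ G.degree x + G.degree y + G.maxDegree := by
  obtain ⟨t, hpath⟩ : ∃ t, romanBondage G + 3 ≤ G.degree x + G.degree y + G.degree t := by
    rcases hclose with hadj | ⟨m, hxm, hmy⟩
    · obtain ⟨z, hzx, hzy, hxz | hyz⟩ := hc.exists_adj_ne_ne h3 x y
      · exact ⟨z, by have := romanBondage_add_three_le G hxz.symm hadj hzy; omega⟩
      · exact ⟨z, romanBondage_add_three_le G hadj hyz hzx.symm⟩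
    · exact ⟨m, by have := romanBondage_add_three_le G hxm hmy hxy; omega⟩
  have := G.degree_le_maxDegree t
  omega

end

/-- If `G` is connected with `Δ(G) ≥ 2`, then
`b_R(G) ≤ 2·ad(G) + Δ(G) − 3`. -/
theorem stmt12 {V : Type*} [Fintype V] [DecidableEq V] (G : SimpleGraph V)
    [DecidableRel G.Adj] (hc : G.Connected) (hΔ : 2 ≤ G.maxDegree) :
    (romanBondage G : ℝ) ≤
      2 * (2 * G.edgeFinset.card / Fintype.card V) + G.maxDegree - 3 := by
  have := hc.nonempty
  have h3 : 3 ≤ Fintype.card V := by have := G.maxDegree_lt_card_verts; omega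
  have : Nontrivial V := Fintype.one_lt_card_iff_nontrivial.1 (by omega)
  obtain ⟨x, y, hxy, hclose, hdeg⟩ :=
    exists_close_pair_degree_add_le G fun v => hc.preconnected.degree_pos_of_nontrivial v
  have hbond : (romanBondage G + 3 : ℝ) ≤ G.degree x + G.degree y + G.maxDegree := by
    exact_mod_cast romanBondage_add_three_le_of_close G hc h3 hxy hclose
  linarith
end
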